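/- arXiv:1707.03494 — 3 statements merged into one kernel-verified Lean document; each statement's English description precedes it below -/
import Mathlib

section
/- Under the bounded-noise model (|ε_v| ≤ M a.s., i.i.d., mean 0, variance σ²), with K₀ a set of k inactive vertices and K any set of k vertices, define ℜ(K) = (b−a)·S₁(K) + ∑_{v∈K active}(A_v − b) where S₁(K) is the number of active vertices in K. If ℜ(K) > 0 then P(S_K < S_{K₀}) ≤ exp( −3·ℜ(K)² / (12σ²|K\K₀| + 4M·ℜ(K)) ). -/
/-!
Chernoff–Bernstein. Since `K₀` is inactive and `|K| = |K₀|`, `S_K − S_{K₀} = ℜ(K) − Z`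
where `Z = ∑_{K₀∖K} ε_v − ∑_{K∖K₀} ε_v` is a sum of `n = 2|K∖K₀|` independent, centered,
`M`-bounded variables of variance `σ²`. The Taylor bound `eˣ ≤ 1 + x + x²/2 + (2/9)|x|³` on
`|x| ≤ 1` bounds the mgf of each summand at `0 ≤ t ≤ 1/M` by `exp(t²σ²/2 · (1 + 4tM/9))`, and
the Chernoff bound for `Z ≥ ℜ` at `t = ℜ / (nσ² + Mℜ)` gives the exponent.
-/

open MeasureTheory ProbabilityTheory Real

lemma exp_le_one_add_add_sq_div_two_add_cubic {x : ℝ} (hx : |x| ≤ 1) :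
    exp x ≤ 1 + x + x ^ 2 / 2 + 2 / 9 * |x| ^ 3 := by
  have h := (abs_sub_le_iff.1 (Real.exp_bound hx (n := 3) (by norm_num))).1
  norm_num [Finset.sum_range_succ, Nat.factorial] at h
  linarith

lemma exp_mul_le_of_abs_le {t y M : ℝ} (ht : 0 ≤ t) (hy : |y| ≤ M) (htM : t * M ≤ 1) :
    exp (t * y) ≤ 1 + t * y + t ^ 2 / 2 * (1 + 4 / 9 * (t * M)) * y ^ 2 := by
  have hty : |t * y| ≤ 1 := by
    rw [abs_mul, abs_of_nonneg ht]
    exact (mul_le_mul_of_nonneg_left hy ht).trans htM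
  have hcube : |t * y| ^ 3 ≤ t ^ 3 * (M * y ^ 2) := by
    rw [abs_mul, abs_of_nonneg ht, mul_pow, pow_succ' |y|, sq_abs]
    gcongr
  nlinarith [exp_le_one_add_add_sq_div_two_add_cubic hty]

lemma mgf_le_exp_of_abs_le {Ω : Type*} [MeasurableSpace Ω] {μ : Measure Ω}
    [IsProbabilityMeasure μ] {Y : Ω → ℝ} {M t : ℝ} (hY : Measurable Y)
    (hb : ∀ᵐ ω ∂μ, |Y ω| ≤ M) (hmean : ∫ ω, Y ω ∂μ = 0) (ht : 0 ≤ t) (htM : t * M ≤ 1) :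
    mgf Y μ t ≤ exp (t ^ 2 * variance Y μ / 2 * (1 + 4 / 9 * (t * M))) := by
  set c := t ^ 2 / 2 * (1 + 4 / 9 * (t * M)) with hc
  have hL2 : MemLp Y 2 μ := .of_bound hY.aestronglyMeasurable M (by simpa using hb)
  have hint : Integrable Y μ := hL2.integrable one_le_two
  have hint_sq : Integrable (fun ω => Y ω ^ 2) μ := hL2.integrable_sq
  have hvar : variance Y μ = ∫ ω, Y ω ^ 2 ∂μ :=
    variance_of_integral_eq_zero hY.aemeasurable hmean
  have hexp : Integrable (fun ω => exp (t * Y ω)) μ :=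
    integrable_exp_mul_of_le t M ht hY.aemeasurable (hb.mono fun ω h => (le_abs_self _).trans h)
  have hlin : Integrable (fun ω => 1 + t * Y ω) μ := (integrable_const 1).add (hint.const_mul t)
  calc mgf Y μ t ≤ ∫ ω, (1 + t * Y ω + c * Y ω ^ 2) ∂μ :=
        integral_mono_ae hexp (hlin.add (hint_sq.const_mul c))
          (hb.mono fun ω h => exp_mul_le_of_abs_le ht h htM)
    _ = 1 + c * variance Y μ := by
        rw [integral_add hlin (hint_sq.const_mul c),
          integral_add (integrable_const 1) (hint.const_mul t), integral_const_mul,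
          integral_const_mul, hmean, hvar]
        simp
    _ ≤ exp (c * variance Y μ) := by linarith [add_one_le_exp (c * variance Y μ)]
    _ = exp (t ^ 2 * variance Y μ / 2 * (1 + 4 / 9 * (t * M))) := by rw [hc]; ring_nf

lemma bernstein_exponent_le {s M r t : ℝ} (hs : 0 ≤ s) (hM : 0 ≤ M) (hr : 0 < r)
    (hD : 0 < s + M * r) (ht : t = r / (s + M * r)) :
    -t * r + s * (t ^ 2 / 2 * (1 + 4 / 9 * (t * M))) ≤ -(3 * r ^ 2) / (6 * s + 4 * M * r) := by
  have hD' : s + M * r ≠ 0 := hD.ne'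
  have hlhs : -t * r + s * (t ^ 2 / 2 * (1 + 4 / 9 * (t * M))) =
      (-r ^ 2 * (s + M * r) ^ 2 + s * r ^ 2 * (s + M * r) / 2 + 2 / 9 * s * M * r ^ 3) /
        (s + M * r) ^ 3 := by
    subst ht
    generalize s + M * r = D at hD'
    field_simp
    ring
  rw [hlhs, div_le_div_iff₀ (by positivity) (by linarith)]
  nlinarith [mul_nonneg (sq_nonneg r) (by positivity :
    (0:ℝ) ≤ 2 / 3 * s ^ 2 * (M * r) + 19 / 9 * s * (M * r) ^ 2 + (M * r) ^ 3)]

section Bernstein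

variable {Ω ι : Type*} [MeasurableSpace Ω] {μ : Measure Ω} [IsProbabilityMeasure μ]
  {W : ι → Ω → ℝ} {S : Finset ι} {σ M t r : ℝ}

lemma mgf_sum_le_exp_of_abs_le (hmeas : ∀ i, Measurable (W i)) (hindep : iIndepFun W μ)
    (hb : ∀ i ∈ S, ∀ᵐ ω ∂μ, |W i ω| ≤ M) (hmean : ∀ i ∈ S, ∫ ω, W i ω ∂μ = 0)
    (hvar : ∀ i ∈ S, variance (W i) μ = σ ^ 2) (ht : 0 ≤ t) (htM : t * M ≤ 1) :
    mgf (∑ i ∈ S, W i) μ t ≤ exp (S.card * (t ^ 2 * σ ^ 2 / 2 * (1 + 4 / 9 * (t * M)))) := by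
  rw [hindep.mgf_sum hmeas, exp_nat_mul, ← Finset.prod_const]
  refine Finset.prod_le_prod (fun _ _ => mgf_nonneg) fun i hi => ?_
  simpa [hvar i hi] using mgf_le_exp_of_abs_le (hmeas i) (hb i hi) (hmean i hi) ht htM

theorem measureReal_sum_ge_le_bernstein (hmeas : ∀ i, Measurable (W i))
    (hindep : iIndepFun W μ) (hb : ∀ i ∈ S, ∀ᵐ ω ∂μ, |W i ω| ≤ M)
    (hmean : ∀ i ∈ S, ∫ ω, W i ω ∂μ = 0) (hvar : ∀ i ∈ S, variance (W i) μ = σ ^ 2)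
    (hM : 0 ≤ M) (hr : 0 < r) :
    μ.real {ω | r ≤ ∑ i ∈ S, W i ω} ≤
      exp (-(3 * r ^ 2) / (6 * σ ^ 2 * S.card + 4 * M * r)) := by
  set s : ℝ := S.card * σ ^ 2 with hs
  have hs0 : 0 ≤ s := by positivity
  rcases le_or_gt (s + M * r) 0 with hD | hD
  · -- then the right-hand side is at least `1`
    have hden : 6 * σ ^ 2 * S.card + 4 * M * r ≤ 0 := by nlinarith
    refine measureReal_le_one.trans (one_le_exp ?_)
    exact div_nonneg_of_nonpos (by nlinarith) hden
  set t := r / (s + M * r) with ht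
  have ht0 : 0 < t := div_pos hr hD
  have htM : t * M ≤ 1 := by
    rw [ht, div_mul_eq_mul_div, div_le_one hD]
    linarith
  have hint : ∀ i ∈ S, Integrable (fun ω => exp (t * W i ω)) μ := fun i hi =>
    integrable_exp_mul_of_le t M ht0.le (hmeas i).aemeasurable
      ((hb i hi).mono fun ω h => (le_abs_self _).trans h)
  calc μ.real {ω | r ≤ ∑ i ∈ S, W i ω}
      ≤ exp (-t * r) * mgf (∑ i ∈ S, W i) μ t := by
        simpa using measure_ge_le_exp_mul_mgf r ht0.le (hindep.integrable_exp_mul_sum hmeas hint)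
    _ ≤ exp (-t * r) * exp (S.card * (t ^ 2 * σ ^ 2 / 2 * (1 + 4 / 9 * (t * M)))) := by
        gcongr
        exact mgf_sum_le_exp_of_abs_le hmeas hindep hb hmean hvar ht0.le htM
    _ = exp (-t * r + s * (t ^ 2 / 2 * (1 + 4 / 9 * (t * M)))) := by
        rw [← exp_add, hs]; ring_nf
    _ ≤ exp (-(3 * r ^ 2) / (6 * σ ^ 2 * S.card + 4 * M * r)) := by
        rw [exp_le_exp, show 6 * σ ^ 2 * S.card = 6 * s by ring]
        exact bernstein_exponent_le hs0 hM hr hD ht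

theorem measureReal_sum_mul_ge_le_bernstein {c : ι → ℝ} (hc : ∀ i, |c i| = 1)
    (hmeas : ∀ i, Measurable (W i)) (hindep : iIndepFun W μ)
    (hb : ∀ i ∈ S, ∀ᵐ ω ∂μ, |W i ω| ≤ M) (hmean : ∀ i ∈ S, ∫ ω, W i ω ∂μ = 0)
    (hvar : ∀ i ∈ S, variance (W i) μ = σ ^ 2) (hM : 0 ≤ M) (hr : 0 < r) :
    μ.real {ω | r ≤ ∑ i ∈ S, c i * W i ω} ≤
      exp (-(3 * r ^ 2) / (6 * σ ^ 2 * S.card + 4 * M * r)) := by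
  have hc2 : ∀ i, c i ^ 2 = 1 := fun i => by rw [← sq_abs, hc i, one_pow]
  refine measureReal_sum_ge_le_bernstein (W := fun i ω => c i * W i ω)
    (fun i => (hmeas i).const_mul _) (hindep.comp _ fun i => measurable_const_mul (c i))
    (fun i hi => ?_) (fun i hi => ?_) (fun i hi => ?_) hM hr
  · filter_upwards [hb i hi] with ω h
    rwa [abs_mul, hc i, one_mul]
  · rw [integral_const_mul, hmean i hi, mul_zero]
  · rw [variance_const_mul, hc2, hvar i hi, one_mul]

end Bernstein

lemma sum_sub_sum_eq_of_inactive {V : Type*} [DecidableEq V] {Act K K₀ : Finset V} {a b : ℝ}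
    {Aval : V → ℝ} (hInact : ∀ v ∉ Act, Aval v = a) (hcard : K.card = K₀.card)
    (hK₀ : K₀ ∩ Act = ∅) :
    ∑ v ∈ K, Aval v - ∑ v ∈ K₀, Aval v =
      (b - a) * ((K ∩ Act).card : ℝ) + ∑ v ∈ K ∩ Act, (Aval v - b) := by
  have hK₀a : ∑ v ∈ K₀, (Aval v - a) = 0 :=
    Finset.sum_eq_zero fun v hv => by
      rw [hInact v fun hA => by simpa [hK₀] using Finset.mem_inter.2 ⟨hv, hA⟩, sub_self]
  have hKa : ∑ v ∈ K, (Aval v - a) = ∑ v ∈ K ∩ Act, (Aval v - a) := by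
    refine (Finset.sum_subset Finset.inter_subset_left fun v hv hvA => ?_).symm
    rw [hInact v fun hA => hvA (Finset.mem_inter.2 ⟨hv, hA⟩), sub_self]
  simp only [Finset.sum_sub_distrib, Finset.sum_const, nsmul_eq_mul] at hK₀a hKa ⊢
  rw [hcard] at hKa
  linarith

lemma sum_sdiff_union_sdiff_sign_mul {V : Type*} [DecidableEq V] (K K₀ : Finset V)
    (f : V → ℝ) :
    ∑ v ∈ K \ K₀ ∪ K₀ \ K, (if v ∈ K₀ then 1 else -1) * f v = ∑ v ∈ K₀, f v - ∑ v ∈ K, f v := by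
  rw [Finset.sum_union disjoint_sdiff_sdiff, ← Finset.sum_sdiff_sub_sum_sdiff]
  simp only [ite_mul, one_mul, neg_one_mul]
  rw [Finset.sum_ite_of_false fun v hv => (Finset.mem_sdiff.1 hv).2,
    Finset.sum_ite_of_true fun v hv => (Finset.mem_sdiff.1 hv).1, Finset.sum_neg_distrib]
  ring

lemma card_sdiff_union_sdiff_of_card_eq {V : Type*} [DecidableEq V] {K K₀ : Finset V}
    (h : K.card = K₀.card) : (K \ K₀ ∪ K₀ \ K).card = 2 * (K \ K₀).card := by
  rw [Finset.card_union_of_disjoint disjoint_sdiff_sdiff, ← Finset.card_sdiff_comm h, two_mul]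

theorem stmt_8_general
    {Ω V : Type*} [MeasurableSpace Ω] (μ : Measure Ω) [IsProbabilityMeasure μ]
    [DecidableEq V]
    (Act : Finset V) (a b σ M : ℝ)
    (Aval : V → ℝ)
    (hInact : ∀ v ∉ Act, Aval v = a)
    (ε : V → Ω → ℝ)
    (hmeas : ∀ v, Measurable (ε v))
    (hindep : iIndepFun ε μ)
    (hmean : ∀ v, ∫ ω, ε v ω ∂μ = 0)
    (hvar : ∀ v, variance (ε v) μ = σ ^ 2)
    (hbd : ∀ v, ∀ᵐ ω ∂μ, |ε v ω| ≤ M)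
    (X : V → Ω → ℝ) (hX : ∀ v ω, X v ω = Aval v + ε v ω)
    (K₀ K : Finset V) (k : ℕ)
    (hKcard : K.card = k) (hK₀card : K₀.card = k)
    (hK₀inact : K₀ ∩ Act = ∅)
    (R : ℝ)
    (hR : R = (b - a) * ((K ∩ Act).card : ℝ) + ∑ v ∈ K ∩ Act, (Aval v - b))
    (hRpos : 0 < R) :
    (μ {ω | ∑ v ∈ K, X v ω < ∑ v ∈ K₀, X v ω}).toReal
      ≤ Real.exp (-(3 * R ^ 2) / (12 * σ ^ 2 * ((K \ K₀).card : ℝ) + 4 * M * R)) := by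
  have hcard : K.card = K₀.card := hKcard.trans hK₀card.symm
  have hgap : ∑ v ∈ K, Aval v - ∑ v ∈ K₀, Aval v = R :=
    hR ▸ sum_sub_sum_eq_of_inactive hInact hcard hK₀inact
  have hM : 0 ≤ M := by
    obtain ⟨v, -⟩ : (K ∩ Act).Nonempty := by
      by_contra h
      simp [Finset.not_nonempty_iff_eq_empty.1 h] at hR
      linarith
    obtain ⟨ω, hω⟩ := (hbd v).exists
    exact (abs_nonneg _).trans hω
  set c : V → ℝ := fun v => if v ∈ K₀ then 1 else -1
  have hsub : {ω | ∑ v ∈ K, X v ω < ∑ v ∈ K₀, X v ω} ⊆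
      {ω | R ≤ ∑ v ∈ K \ K₀ ∪ K₀ \ K, c v * ε v ω} := by
    intro ω hω
    simp only [Set.mem_ofPred_eq, hX, Finset.sum_add_distrib] at hω ⊢
    rw [sum_sdiff_union_sdiff_sign_mul]
    linarith
  calc (μ {ω | ∑ v ∈ K, X v ω < ∑ v ∈ K₀, X v ω}).toReal
      ≤ μ.real {ω | R ≤ ∑ v ∈ K \ K₀ ∪ K₀ \ K, c v * ε v ω} := measureReal_mono hsub
    _ ≤ exp (-(3 * R ^ 2) / (6 * σ ^ 2 * (K \ K₀ ∪ K₀ \ K).card + 4 * M * R)) :=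
        measureReal_sum_mul_ge_le_bernstein (fun v => by by_cases hv : v ∈ K₀ <;> simp [c, hv])
          hmeas hindep (fun v _ => hbd v) (fun v _ => hmean v) (fun v _ => hvar v) hM hRpos
    _ = exp (-(3 * R ^ 2) / (12 * σ ^ 2 * (K \ K₀).card + 4 * M * R)) := by
        rw [card_sdiff_union_sdiff_of_card_eq hcard]
        push_cast
        ring_nf

/-- Bernstein-type misselection bound for a single candidate set `K`:
`P(S_K < S_{K₀}) ≤ exp(−3ℜ(K)² / (12σ²|K\K₀| + 4Mℜ(K)))` when `ℜ(K) > 0`. -/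
theorem stmt_8
    {Ω V : Type*} [MeasurableSpace Ω] (μ : Measure Ω) [IsProbabilityMeasure μ]
    [Fintype V] [DecidableEq V]
    (Act : Finset V) (a b σ M : ℝ) (hab : a < b)
    (Aval : V → ℝ)
    (hInact : ∀ v ∉ Act, Aval v = a)
    (hAct : ∀ v ∈ Act, b ≤ Aval v)
    (ε : V → Ω → ℝ)
    (hmeas : ∀ v, Measurable (ε v))
    (hindep : iIndepFun ε μ)
    (hident : ∀ v w, IdentDistrib (ε v) (ε w) μ μ)
    (hmean : ∀ v, ∫ ω, ε v ω ∂μ = 0)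
    (hvar : ∀ v, variance (ε v) μ = σ ^ 2)
    (hbd : ∀ v, ∀ᵐ ω ∂μ, |ε v ω| ≤ M)
    (X : V → Ω → ℝ) (hX : ∀ v ω, X v ω = Aval v + ε v ω)
    (K₀ K : Finset V) (k : ℕ)
    (hKcard : K.card = k) (hK₀card : K₀.card = k)
    (hK₀inact : K₀ ∩ Act = ∅)
    (R : ℝ)
    (hR : R = (b - a) * ((K ∩ Act).card : ℝ) + ∑ v ∈ K ∩ Act, (Aval v - b))
    (hRpos : 0 < R) :
    (μ {ω | ∑ v ∈ K, X v ω < ∑ v ∈ K₀, X v ω}).toReal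
      ≤ Real.exp (-(3 * R ^ 2) / (12 * σ ^ 2 * ((K \ K₀).card : ℝ) + 4 * M * R)) :=
  stmt_8_general μ Act a b σ M Aval hInact ε hmeas hindep hmean hvar hbd X hX K₀ K k hKcard hK₀card
    hK₀inact R hR hRpos
end

section
/- Under the bounded-noise model, let 𝒦 be any finite collection of k-element vertex subsets and K₀ a k-element set of inactive vertices. Define ℜ(K) as above and assume ℜ(K) > 0 for all K ∈ 𝒦 containing at least one active vertex. Then P(∃ K ∈ 𝒦 with K ∩ A ≠ ∅ and S_K < S_{K₀}) ≤ ∑_{K∈𝒦, K∩A≠∅} exp(−3ℜ(K)²/(12σ²|K\K₀| + 4M·ℜ(K))). -/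
/-!
For a fixed `K` meeting the active set, the signal part of `S_{K₀} - S_K` is exactly `-ℜ(K)`,
and the noise part is a signed sum of the `|K \ K₀| + |K₀ \ K| = 2 |K \ K₀|` independent
centered noises outside `K ∩ K₀`. Bounding `exp x ≤ 1 + x + x² / (2 (1 - u/3))` for `x ≤ u < 3`
controls each moment generating function by its variance, so a Chernoff bound gives the
Bernstein-type estimate for that `K`; a union bound over `𝒦` finishes.
-/

open MeasureTheory ProbabilityTheory Finset Real
open scoped Nat

namespace Real

lemma exp_le_one_add_add_sq_div_two_of_nonpos {x : ℝ} (hx : x ≤ 0) :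
    exp x ≤ 1 + x + x ^ 2 / 2 := by
  have hinv : 1 - x + x ^ 2 / 2 ≤ exp (-x) := by
    simpa [sub_eq_add_neg] using quadratic_le_exp_of_nonneg (neg_nonneg.2 hx)
  have hpos : 0 < 1 - x + x ^ 2 / 2 := by nlinarith
  -- `(1 + x + x²/2) (1 - x + x²/2) = 1 + x⁴/4 ≥ 1`
  have hmul : exp x * exp (-x) = 1 := by rw [← exp_add, add_neg_cancel, exp_zero]
  nlinarith [exp_pos x, sq_nonneg (x ^ 2)]

lemma exp_le_one_add_add_sq_div_of_nonneg {x u : ℝ} (hx : 0 ≤ x) (hxu : x ≤ u) (hu : u < 3) :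
    exp x ≤ 1 + x + x ^ 2 / (2 * (1 - u / 3)) := by
  have hq : 0 ≤ u / 3 := by linarith
  have hq1 : u / 3 < 1 := by linarith
  have hexp : HasSum (fun n ↦ x ^ (n + 2) / (n + 2)!) (exp x - (1 + x)) := by
    have := (hasSum_nat_add_iff' 2).2 (NormedSpace.expSeries_div_hasSum_exp x)
    simpa [← exp_eq_exp_ℝ, sum_range_succ, add_comm] using this
  have hgeom : HasSum (fun n : ℕ ↦ x ^ 2 / 2 * (u / 3) ^ n) (x ^ 2 / (2 * (1 - u / 3))) := by
    rw [← div_div]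
    simpa only [← div_eq_mul_inv] using
      (hasSum_geometric_of_lt_one hq hq1).mul_left (x ^ 2 / 2)
  have hterm (n : ℕ) : x ^ (n + 2) / (n + 2)! ≤ x ^ 2 / 2 * (u / 3) ^ n := by
    have hfact : (2 * 3 ^ n : ℝ) ≤ (n + 2)! := by
      exact_mod_cast (Nat.factorial_mul_pow_le_factorial (m := 2) (n := n)).trans_eq
        (by rw [add_comm])
    calc x ^ (n + 2) / (n + 2)! ≤ x ^ 2 * u ^ n / (2 * 3 ^ n) := by
          have hu₀ : 0 ≤ u := hx.trans hxu
          rw [pow_add, mul_comm]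
          gcongr
      _ = x ^ 2 / 2 * (u / 3) ^ n := by rw [div_pow]; ring
  linarith [hasSum_le hterm hexp hgeom]

lemma exp_le_one_add_add_sq_div {x u : ℝ} (hu₀ : 0 ≤ u) (hxu : x ≤ u) (hu : u < 3) :
    exp x ≤ 1 + x + x ^ 2 / (2 * (1 - u / 3)) := by
  rcases le_total x 0 with hx | hx
  · have : x ^ 2 / 2 ≤ x ^ 2 / (2 * (1 - u / 3)) := by
      gcongr
      · linarith
      · linarith
    linarith [exp_le_one_add_add_sq_div_two_of_nonpos hx]
  · exact exp_le_one_add_add_sq_div_of_nonneg hx hxu hu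

end Real

namespace Finset

lemma sum_sub_sum_le_of_sum_add_lt {V : Type*} [DecidableEq V] {f g : V → ℝ}
    {K K₀ : Finset V} (h : ∑ v ∈ K, (f v + g v) < ∑ v ∈ K₀, (f v + g v)) :
    ∑ v ∈ K, f v - ∑ v ∈ K₀, f v ≤ ∑ v ∈ K₀ \ K, g v - ∑ v ∈ K \ K₀, g v := by
  rw [sum_add_distrib, sum_add_distrib] at h
  rw [sum_sdiff_sub_sum_sdiff]
  linarith

lemma sum_sub_sum_eq_sum_inter_sub {V : Type*} [DecidableEq V] {A K K₀ : Finset V}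
    {f : V → ℝ} {a : ℝ} (hf : ∀ v ∉ A, f v = a) (hK₀ : K₀ ∩ A = ∅) (hcard : #K = #K₀) :
    ∑ v ∈ K, f v - ∑ v ∈ K₀, f v = ∑ v ∈ K ∩ A, (f v - a) := by
  have hsplit (L : Finset V) : ∑ v ∈ L, f v = #L * a + ∑ v ∈ L ∩ A, (f v - a) := by
    rw [sum_subset inter_subset_left fun v _ hv ↦ by
      rw [hf v fun hA ↦ hv (mem_inter.2 ⟨‹_›, hA⟩), sub_self]]
    simp [sum_sub_distrib]
  rw [hsplit K, hsplit K₀, hK₀, hcard, sum_empty, add_zero, add_sub_cancel_left]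

end Finset

namespace ProbabilityTheory

variable {Ω : Type*} [MeasurableSpace Ω] {μ : Measure Ω}

lemma nonneg_of_ae_abs_le [NeZero μ] {W : Ω → ℝ} {M : ℝ} (hbd : ∀ᵐ ω ∂μ, |W ω| ≤ M) : 0 ≤ M := by
  obtain ⟨ω, hω⟩ := hbd.exists
  exact (abs_nonneg _).trans hω

lemma integrable_exp_mul_of_ae_abs_le [IsFiniteMeasure μ] {W : Ω → ℝ} {M : ℝ} (hW : AEMeasurable W μ)
    (hbd : ∀ᵐ ω ∂μ, |W ω| ≤ M) (t : ℝ) : Integrable (fun ω ↦ exp (t * W ω)) μ := by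
  refine .of_bound (hW.const_mul t).exp.aestronglyMeasurable (exp (|t| * M)) ?_
  filter_upwards [hbd] with ω hω
  rw [norm_of_nonneg (exp_pos _).le, exp_le_exp]
  calc t * W ω ≤ |t * W ω| := le_abs_self _
    _ = |t| * |W ω| := abs_mul _ _
    _ ≤ |t| * M := mul_le_mul_of_nonneg_left hω (abs_nonneg t)

lemma mgf_le_exp_variance_mul_of_ae_abs_le [IsProbabilityMeasure μ] {W : Ω → ℝ} {M t : ℝ} (hW : AEMeasurable W μ)
    (hmean : μ[W] = 0) (hbd : ∀ᵐ ω ∂μ, |W ω| ≤ M) (ht : 0 ≤ t) (htM : t * M < 3) :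
    mgf W μ t ≤ exp (variance W μ * (t ^ 2 / (2 * (1 - t * M / 3)))) := by
  set c := t ^ 2 / (2 * (1 - t * M / 3))
  have hM := nonneg_of_ae_abs_le hbd
  have hLp : MemLp W 2 μ := .of_bound hW.aestronglyMeasurable M (by simpa using hbd)
  have hint : Integrable W μ := hLp.integrable one_le_two
  have hpointwise : ∀ᵐ ω ∂μ, exp (t * W ω) ≤ 1 + t * W ω + c * W ω ^ 2 := by
    filter_upwards [hbd] with ω hω
    have := exp_le_one_add_add_sq_div (mul_nonneg ht hM)
      (mul_le_mul_of_nonneg_left ((le_abs_self _).trans hω) ht) htM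
    convert this using 2
    ring
  have hlin_int : Integrable (fun ω ↦ 1 + t * W ω) μ := (integrable_const 1).add (hint.const_mul t)
  have hsq_int : Integrable (fun ω ↦ c * W ω ^ 2) μ := hLp.integrable_sq.const_mul c
  calc mgf W μ t ≤ ∫ ω, (1 + t * W ω + c * W ω ^ 2) ∂μ :=
        integral_mono_ae (integrable_exp_mul_of_ae_abs_le hW hbd t) (hlin_int.add hsq_int) hpointwise
    _ = 1 + variance W μ * c := by
        rw [integral_add hlin_int hsq_int, integral_add (integrable_const 1) (hint.const_mul t),
          integral_const_mul, integral_const_mul, hmean, ← variance_of_integral_eq_zero hW hmean]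
        simp [mul_comm]
    _ ≤ exp (variance W μ * c) := by linarith [add_one_le_exp (variance W μ * c)]

lemma measureReal_sum_ge_le_exp_of_ae_abs_le {ι : Type*} {W : ι → Ω → ℝ} {M v t : ℝ}
    (hindep : iIndepFun W μ) (hmeas : ∀ i, Measurable (W i)) (hmean : ∀ i, μ[W i] = 0)
    (hvar : ∀ i, variance (W i) μ ≤ v) (hbd : ∀ i, ∀ᵐ ω ∂μ, |W i ω| ≤ M)
    (S : Finset ι) (r : ℝ) (ht : 0 ≤ t) (htM : t * M < 3) :
    μ.real {ω | r ≤ ∑ i ∈ S, W i ω} ≤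
      exp (-t * r + #S * v * (t ^ 2 / (2 * (1 - t * M / 3)))) := by
  have := hindep.isProbabilityMeasure
  set c := t ^ 2 / (2 * (1 - t * M / 3))
  have hc : 0 ≤ c := div_nonneg (sq_nonneg t) (by linarith)
  have hmgf (i : ι) : mgf (W i) μ t ≤ exp (v * c) :=
    (mgf_le_exp_variance_mul_of_ae_abs_le (hmeas i).aemeasurable (hmean i) (hbd i) ht htM).trans
      (exp_le_exp.2 (mul_le_mul_of_nonneg_right (hvar i) hc))
  have hint := hindep.integrable_exp_mul_sum hmeas (s := S) fun i _ ↦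
    integrable_exp_mul_of_ae_abs_le (hmeas i).aemeasurable (hbd i) t
  calc μ.real {ω | r ≤ ∑ i ∈ S, W i ω}
      = μ.real {ω | r ≤ (∑ i ∈ S, W i) ω} := by simp only [Finset.sum_apply]
    _ ≤ exp (-t * r) * mgf (∑ i ∈ S, W i) μ t := measure_ge_le_exp_mul_mgf r ht hint
    _ ≤ exp (-t * r) * exp (v * c) ^ #S := by
        rw [hindep.mgf_sum hmeas]
        gcongr
        exact (prod_le_prod (fun _ _ ↦ mgf_nonneg) fun i _ ↦ hmgf i).trans_eq (prod_const _)
    _ = exp (-t * r + #S * v * c) := by rw [← exp_nat_mul, ← exp_add, mul_assoc]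

lemma measureReal_sum_ge_le_bernstein {ι : Type*} {W : ι → Ω → ℝ} {M v : ℝ}
    (hindep : iIndepFun W μ) (hmeas : ∀ i, Measurable (W i)) (hmean : ∀ i, μ[W i] = 0)
    (hv : 0 ≤ v) (hvar : ∀ i, variance (W i) μ ≤ v) (hM : 0 ≤ M)
    (hbd : ∀ i, ∀ᵐ ω ∂μ, |W i ω| ≤ M) (S : Finset ι) {r : ℝ} (hr : 0 < r) :
    μ.real {ω | r ≤ ∑ i ∈ S, W i ω} ≤ exp (-(3 * r ^ 2) / (6 * (#S * v) + 4 * M * r)) := by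
  have := hindep.isProbabilityMeasure
  set a : ℝ := #S * v
  set D := 6 * a + 4 * M * r
  have ha : 0 ≤ a := by positivity
  rcases le_or_gt D 0 with hD | hD
  · exact measureReal_le_one.trans (one_le_exp (div_nonneg_of_nonpos (by nlinarith) hD))
  have hE : 0 < 6 * a + 2 * M * r := by nlinarith [mul_nonneg hM hr.le]
  have htM : 6 * r / D * M < 3 := by
    rw [div_mul_eq_mul_div, div_lt_iff₀ hD]
    nlinarith
  -- Chernoff at `t = 6r/D`, where `1 - tM/3 = (6a + 2Mr)/D`.
  refine (measureReal_sum_ge_le_exp_of_ae_abs_le hindep hmeas hmean hvar hbd S r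
    (by positivity) htM).trans (exp_le_exp.2 ?_)
  have hquad : a * ((6 * r / D) ^ 2 / (2 * (1 - 6 * r / D * M / 3)))
      = 3 * r ^ 2 / D * (6 * a / (6 * a + 2 * M * r)) := by
    have h1 : 1 - 6 * r / D * M / 3 = (6 * a + 2 * M * r) / D := by
      field_simp
      ring
    rw [h1]
    field_simp
    ring
  have hfrac : 6 * a / (6 * a + 2 * M * r) ≤ 1 :=
    (div_le_one hE).2 (by nlinarith [mul_nonneg hM hr.le])
  have hlin : -(6 * r / D) * r = -2 * (3 * r ^ 2 / D) := by ring
  rw [hquad, hlin, neg_div]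
  nlinarith [mul_le_mul_of_nonneg_left hfrac (by positivity : 0 ≤ 3 * r ^ 2 / D)]

lemma measureReal_sum_sub_sum_ge_le_bernstein {ι : Type*} [DecidableEq ι] {ε : ι → Ω → ℝ}
    {M v : ℝ} (hindep : iIndepFun ε μ) (hmeas : ∀ i, Measurable (ε i))
    (hmean : ∀ i, μ[ε i] = 0) (hv : 0 ≤ v) (hvar : ∀ i, variance (ε i) μ ≤ v) (hM : 0 ≤ M)
    (hbd : ∀ i, ∀ᵐ ω ∂μ, |ε i ω| ≤ M) {P Q : Finset ι} (hPQ : Disjoint P Q) {r : ℝ}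
    (hr : 0 < r) :
    μ.real {ω | r ≤ ∑ i ∈ Q, ε i ω - ∑ i ∈ P, ε i ω} ≤
      exp (-(3 * r ^ 2) / (6 * ((#P + #Q) * v) + 4 * M * r)) := by
  set sgn : ι → ℝ := fun i ↦ if i ∈ P then -1 else 1
  have hsgn_sq (i : ι) : sgn i ^ 2 = 1 := by simp only [sgn]; split_ifs <;> norm_num
  have hsgn_abs (i : ι) : |sgn i| = 1 := by simp only [sgn]; split_ifs <;> norm_num
  have hsum (ω : Ω) : ∑ i ∈ P ∪ Q, sgn i * ε i ω = ∑ i ∈ Q, ε i ω - ∑ i ∈ P, ε i ω := by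
    have hP : ∑ i ∈ P, sgn i * ε i ω = -∑ i ∈ P, ε i ω := by
      rw [← sum_neg_distrib]
      exact sum_congr rfl fun i hi ↦ by simp [sgn, hi]
    have hQ : ∑ i ∈ Q, sgn i * ε i ω = ∑ i ∈ Q, ε i ω :=
      sum_congr rfl fun i hi ↦ by simp [sgn, disjoint_right.1 hPQ hi]
    rw [sum_union hPQ, hP, hQ]
    ring
  have h := measureReal_sum_ge_le_bernstein (W := fun i ω ↦ sgn i * ε i ω)
    (hindep.comp (fun i x ↦ sgn i * x) fun i ↦ measurable_const_mul (sgn i))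
    (fun i ↦ (hmeas i).const_mul (sgn i))
    (fun i ↦ by rw [integral_const_mul, hmean i, mul_zero]) hv
    (fun i ↦ by rw [variance_const_mul, hsgn_sq, one_mul]; exact hvar i) hM
    (fun i ↦ by filter_upwards [hbd i] with ω hω; rwa [abs_mul, hsgn_abs, one_mul])
    (P ∪ Q) hr
  simpa only [hsum, card_union_of_disjoint hPQ, Nat.cast_add] using h

end ProbabilityTheory

theorem stmt_9_general
    {Ω V : Type*} [MeasurableSpace Ω] (μ : Measure Ω) [IsProbabilityMeasure μ]
    [DecidableEq V]
    (Act : Finset V) (a b σ M : ℝ)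
    (Aval : V → ℝ)
    (hInact : ∀ v ∉ Act, Aval v = a)
    (ε : V → Ω → ℝ)
    (hmeas : ∀ v, Measurable (ε v))
    (hindep : iIndepFun ε μ)
    (hmean : ∀ v, ∫ ω, ε v ω ∂μ = 0)
    (hvar : ∀ v, variance (ε v) μ = σ ^ 2)
    (hbd : ∀ v, ∀ᵐ ω ∂μ, |ε v ω| ≤ M)
    (X : V → Ω → ℝ) (hX : ∀ v ω, X v ω = Aval v + ε v ω)
    (k : ℕ)
    (𝒦 : Finset (Finset V)) (h𝒦card : ∀ K ∈ 𝒦, K.card = k)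
    (K₀ : Finset V) (hK₀card : K₀.card = k) (hK₀inact : K₀ ∩ Act = ∅)
    (R : Finset V → ℝ)
    (hR : ∀ K, R K = (b - a) * ((K ∩ Act).card : ℝ) + ∑ v ∈ K ∩ Act, (Aval v - b))
    (hRpos : ∀ K ∈ 𝒦, (K ∩ Act).Nonempty → 0 < R K) :
    (μ {ω | ∃ K ∈ 𝒦, (K ∩ Act).Nonempty ∧ ∑ v ∈ K, X v ω < ∑ v ∈ K₀, X v ω}).toReal
      ≤ ∑ K ∈ 𝒦.filter (fun K => (K ∩ Act).Nonempty),
          Real.exp (-(3 * (R K) ^ 2) /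
            (12 * σ ^ 2 * ((K \ K₀).card : ℝ) + 4 * M * R K)) := by
  have hbound (K : Finset V) (hK : K ∈ 𝒦.filter fun K ↦ (K ∩ Act).Nonempty) :
      μ.real {ω | ∑ v ∈ K, X v ω < ∑ v ∈ K₀, X v ω} ≤
        exp (-(3 * R K ^ 2) / (12 * σ ^ 2 * #(K \ K₀) + 4 * M * R K)) := by
    obtain ⟨hK𝒦, hKAct⟩ := mem_filter.1 hK
    have hRK := hRpos K hK𝒦 hKAct
    obtain ⟨v₀, -⟩ := hKAct
    have hcard : #K = #K₀ := (h𝒦card K hK𝒦).trans hK₀card.symm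
    have hgap : ∑ v ∈ K, Aval v - ∑ v ∈ K₀, Aval v = R K := by
      rw [sum_sub_sum_eq_sum_inter_sub hInact hK₀inact hcard, hR]
      simp only [sum_sub_distrib, sum_const, nsmul_eq_mul]
      ring
    have hevent : {ω | ∑ v ∈ K, X v ω < ∑ v ∈ K₀, X v ω} ⊆
        {ω | R K ≤ ∑ v ∈ K₀ \ K, ε v ω - ∑ v ∈ K \ K₀, ε v ω} := fun ω hω ↦ by
      simp only [Set.mem_ofPred_eq, hX] at hω ⊢
      exact hgap ▸ sum_sub_sum_le_of_sum_add_lt hω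
    refine (measureReal_mono hevent).trans <| (measureReal_sum_sub_sum_ge_le_bernstein hindep
      hmeas hmean (sq_nonneg σ) (fun v ↦ (hvar v).le) (nonneg_of_ae_abs_le (hbd v₀)) hbd
      disjoint_sdiff_sdiff hRK).trans_eq ?_
    rw [card_sdiff_comm hcard.symm]
    ring_nf
  calc (μ {ω | ∃ K ∈ 𝒦, (K ∩ Act).Nonempty ∧ ∑ v ∈ K, X v ω < ∑ v ∈ K₀, X v ω}).toReal
      = μ.real (⋃ K ∈ 𝒦.filter fun K ↦ (K ∩ Act).Nonempty,
          {ω | ∑ v ∈ K, X v ω < ∑ v ∈ K₀, X v ω}) := by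
        simp only [measureReal_def, Set.iUnion_ofPred, mem_filter, exists_prop, and_assoc]
    _ ≤ _ := (measureReal_biUnion_finset_le _ _).trans (sum_le_sum hbound)

/-- Union bound over a family `𝒦` of candidate `k`-sets: the probability that some
active-containing `K ∈ 𝒦` beats the inactive set `K₀` is at most the sum of the
individual Bernstein bounds. -/
theorem stmt_9
    {Ω V : Type*} [MeasurableSpace Ω] (μ : Measure Ω) [IsProbabilityMeasure μ]
    [Fintype V] [DecidableEq V]
    (Act : Finset V) (a b σ M : ℝ) (hab : a < b)
    (Aval : V → ℝ)
    (hInact : ∀ v ∉ Act, Aval v = a)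
    (hAct : ∀ v ∈ Act, b ≤ Aval v)
    (ε : V → Ω → ℝ)
    (hmeas : ∀ v, Measurable (ε v))
    (hindep : iIndepFun ε μ)
    (hident : ∀ v w, IdentDistrib (ε v) (ε w) μ μ)
    (hmean : ∀ v, ∫ ω, ε v ω ∂μ = 0)
    (hvar : ∀ v, variance (ε v) μ = σ ^ 2)
    (hbd : ∀ v, ∀ᵐ ω ∂μ, |ε v ω| ≤ M)
    (X : V → Ω → ℝ) (hX : ∀ v ω, X v ω = Aval v + ε v ω)
    (k : ℕ)
    (𝒦 : Finset (Finset V)) (h𝒦card : ∀ K ∈ 𝒦, K.card = k)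
    (K₀ : Finset V) (hK₀card : K₀.card = k) (hK₀inact : K₀ ∩ Act = ∅)
    (R : Finset V → ℝ)
    (hR : ∀ K, R K = (b - a) * ((K ∩ Act).card : ℝ) + ∑ v ∈ K ∩ Act, (Aval v - b))
    (hRpos : ∀ K ∈ 𝒦, (K ∩ Act).Nonempty → 0 < R K) :
    (μ {ω | ∃ K ∈ 𝒦, (K ∩ Act).Nonempty ∧ ∑ v ∈ K, X v ω < ∑ v ∈ K₀, X v ω}).toReal
      ≤ ∑ K ∈ 𝒦.filter (fun K => (K ∩ Act).Nonempty),
          Real.exp (-(3 * (R K) ^ 2) /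
            (12 * σ ^ 2 * ((K \ K₀).card : ℝ) + 4 * M * R K)) :=
  stmt_9_general μ Act a b σ M Aval hInact ε hmeas hindep hmean hvar hbd X hX k 𝒦 h𝒦card K₀ hK₀card
    hK₀inact R hR hRpos
end

section
/- (Consistency master theorem) For each n, consider the bounded-noise graph model on n vertices with constants a < b independent of n, noise bound M and variance σ² independent of n. Let 𝒦(n) be the family of candidate k(n)-subsets used by the scan algorithm, and suppose it contains a fully inactive set K₀(n). If k(n)/log|𝒦(n)| → ∞ and |𝒦(n)|·e^{−n} → 0, then the scan estimator â_n = (1/k(n))·min-average over 𝒦(n) converges to a in probability as n → ∞ (indeed P(|â_n − a| > δ) → 0 for every δ > 0), regardless of the values A_v ≥ b assigned by the adversary on active vertices. -/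
/-!
Write `X = A + ε`. Since `K̂` beats the inactive set `K₀`, `k (â - a) ≤ ∑_{K₀} ε`; since
`A ≥ a` everywhere, `k (â - a) ≥ ∑_{K̂} ε`. Hence `|â - a| > δ` forces an upper deviation of
the noise on `K₀` or a lower deviation on some `K ∈ 𝒦`. By Hoeffding each such event has
probability at most `exp (-k δ² / (2 M²))`, so a union bound gives
`P (|â - a| > δ) ≤ exp (-k δ² / (2 M²)) (1 + |𝒦|)`, which tends to `0` because
`k / log |𝒦| → ∞`.
-/

open MeasureTheory ProbabilityTheory Filter

section ScanConsistency

open Real Finset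
open scoped Topology

lemma card_mul_le_sum_or_sum_le_neg_of_scan {ι : Type*} {A e : ι → ℝ} {a δ : ℝ} {k : ℕ}
    {K₀ Khat : Finset ι} (hK₀ : #K₀ = k) (hKhat : #Khat = k) (hA₀ : ∀ v ∈ K₀, A v = a)
    (hA : ∀ v ∈ Khat, a ≤ A v)
    (hmin : ∑ v ∈ Khat, (A v + e v) ≤ ∑ v ∈ K₀, (A v + e v))
    (hdev : δ < |1 / k * ∑ v ∈ Khat, (A v + e v) - a|) :
    k * δ ≤ ∑ v ∈ K₀, e v ∨ ∑ v ∈ Khat, e v ≤ -(k * δ) := by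
  rcases k.eq_zero_or_pos with rfl | hk
  · simp [card_eq_zero.mp hK₀]
  have hup : ∑ v ∈ Khat, (A v + e v) ≤ k * a + ∑ v ∈ K₀, e v := by
    rwa [sum_add_distrib (s := K₀), sum_congr rfl hA₀, sum_const, hK₀, nsmul_eq_mul] at hmin
  have hlow : k * a + ∑ v ∈ Khat, e v ≤ ∑ v ∈ Khat, (A v + e v) := by
    rw [sum_add_distrib, ← hKhat, ← nsmul_eq_mul, ← sum_const]
    gcongr with v hv
    exact hA v hv
  have hkT : (k : ℝ) * (1 / k * ∑ v ∈ Khat, (A v + e v) - a)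
      = ∑ v ∈ Khat, (A v + e v) - k * a := by
    field_simp
  have hk' : (0 : ℝ) < k := by exact_mod_cast hk
  rcases lt_abs.mp hdev with h | h
  · exact Or.inl (by linarith [mul_lt_mul_of_pos_left h hk'])
  · exact Or.inr (by linarith [mul_lt_mul_of_pos_left h hk'])

section Noise

variable {Ω ι : Type*} [MeasurableSpace Ω] {μ : Measure Ω}

lemma hasSubgaussianMGF_of_abs_le [IsProbabilityMeasure μ] {X : Ω → ℝ} {M : ℝ}
    (hX : Measurable X) (hmean : ∫ ω, X ω ∂μ = 0) (hbd : ∀ᵐ ω ∂μ, |X ω| ≤ M) :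
    HasSubgaussianMGF X (‖M‖₊ ^ 2) μ := by
  have h := hasSubgaussianMGF_of_mem_Icc_of_integral_eq_zero hX.aemeasurable
    (hbd.mono fun _ h ↦ abs_le.mp h) hmean
  convert h using 2
  ext
  simp [← two_mul]

variable {ε : ι → Ω → ℝ} {M : ℝ}

lemma measureReal_card_mul_le_sum_le (hmeas : ∀ i, Measurable (ε i))
    (hindep : iIndepFun ε μ) (hmean : ∀ i, ∫ ω, ε i ω ∂μ = 0)
    (hbd : ∀ i, ∀ᵐ ω ∂μ, |ε i ω| ≤ M) (K : Finset ι) {δ : ℝ} (hδ : 0 ≤ δ) :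
    μ.real {ω | #K * δ ≤ ∑ i ∈ K, ε i ω} ≤ exp (-(δ ^ 2 / (2 * M ^ 2)) * #K) := by
  have := hindep.isProbabilityMeasure
  refine (HasSubgaussianMGF.measure_sum_ge_le_of_iIndepFun hindep
    (fun i _ ↦ hasSubgaussianMGF_of_abs_le (hmeas i) (hmean i) (hbd i))
    (by positivity)).trans_eq ?_
  rcases eq_or_ne (#K : ℝ) 0 with hK | hK
  · simp [hK]
  · push_cast
    rw [sum_const, nsmul_eq_mul, norm_eq_abs, sq_abs]
    congr 1
    rw [show -(#K * δ) ^ 2 = #K * -(δ ^ 2 * #K) by ring,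
      show 2 * (#K * M ^ 2) = #K * (2 * M ^ 2) by ring, mul_div_mul_left _ _ hK]
    ring

lemma measureReal_sum_le_neg_card_mul_le (hmeas : ∀ i, Measurable (ε i))
    (hindep : iIndepFun ε μ) (hmean : ∀ i, ∫ ω, ε i ω ∂μ = 0)
    (hbd : ∀ i, ∀ᵐ ω ∂μ, |ε i ω| ≤ M) (K : Finset ι) {δ : ℝ} (hδ : 0 ≤ δ) :
    μ.real {ω | ∑ i ∈ K, ε i ω ≤ -(#K * δ)} ≤ exp (-(δ ^ 2 / (2 * M ^ 2)) * #K) := by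
  have h := measureReal_card_mul_le_sum_le (ε := fun i ω ↦ -ε i ω) (fun i ↦ (hmeas i).neg)
    (hindep.comp (fun _ x ↦ -x) fun _ ↦ measurable_neg)
    (fun i ↦ by rw [integral_neg, hmean, neg_zero])
    (fun i ↦ (hbd i).mono fun _ h ↦ by rwa [abs_neg]) K hδ
  simpa only [sum_neg_distrib, le_neg] using h

lemma measureReal_scan_deviation_le (hmeas : ∀ i, Measurable (ε i))
    (hindep : iIndepFun ε μ) (hmean : ∀ i, ∫ ω, ε i ω ∂μ = 0)
    (hbd : ∀ i, ∀ᵐ ω ∂μ, |ε i ω| ≤ M) {A : ι → ℝ} {a : ℝ} (hA : ∀ v, a ≤ A v)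
    {𝒦 : Finset (Finset ι)} {k : ℕ} (h𝒦 : ∀ K ∈ 𝒦, #K = k) {K₀ : Finset ι} (hK₀ : K₀ ∈ 𝒦)
    (hA₀ : ∀ v ∈ K₀, A v = a) {Khat : Ω → Finset ι}
    (hKhat : ∀ ω, Khat ω ∈ 𝒦 ∧ ∑ v ∈ Khat ω, (A v + ε v ω) ≤ ∑ v ∈ K₀, (A v + ε v ω))
    {δ : ℝ} (hδ : 0 ≤ δ) :
    μ.real {ω | δ < |1 / k * ∑ v ∈ Khat ω, (A v + ε v ω) - a|}
      ≤ exp (-(δ ^ 2 / (2 * M ^ 2)) * k) * (1 + #𝒦) := by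
  have := hindep.isProbabilityMeasure
  have hsub : {ω | δ < |1 / k * ∑ v ∈ Khat ω, (A v + ε v ω) - a|} ⊆
      {ω | k * δ ≤ ∑ v ∈ K₀, ε v ω} ∪ ⋃ K ∈ 𝒦, {ω | ∑ v ∈ K, ε v ω ≤ -(k * δ)} := by
    intro ω hω
    obtain ⟨hmem, hmin⟩ := hKhat ω
    rcases card_mul_le_sum_or_sum_le_neg_of_scan (h𝒦 K₀ hK₀) (h𝒦 _ hmem) hA₀
      (fun v _ ↦ hA v) hmin hω with h | h
    · exact Or.inl h
    · exact Or.inr (Set.mem_biUnion hmem h)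
  calc μ.real {ω | δ < |1 / k * ∑ v ∈ Khat ω, (A v + ε v ω) - a|}
      ≤ μ.real {ω | k * δ ≤ ∑ v ∈ K₀, ε v ω}
        + ∑ K ∈ 𝒦, μ.real {ω | ∑ v ∈ K, ε v ω ≤ -(k * δ)} :=
        (measureReal_mono hsub).trans <| (measureReal_union_le _ _).trans <|
          add_le_add le_rfl (measureReal_biUnion_finset_le _ _)
    _ ≤ exp (-(δ ^ 2 / (2 * M ^ 2)) * k) + ∑ K ∈ 𝒦, exp (-(δ ^ 2 / (2 * M ^ 2)) * k) := by
        gcongr with K hK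
        · simpa only [h𝒦 K₀ hK₀] using
            measureReal_card_mul_le_sum_le hmeas hindep hmean hbd K₀ hδ
        · simpa only [h𝒦 K hK] using
            measureReal_sum_le_neg_card_mul_le hmeas hindep hmean hbd K hδ
    _ = exp (-(δ ^ 2 / (2 * M ^ 2)) * k) * (1 + #𝒦) := by
        rw [sum_const, nsmul_eq_mul]
        ring

end Noise

variable {α : Type*} {l : Filter α} {k : α → ℝ} {N : α → ℕ}

lemma eventually_log_pos_of_tendsto_div_log (h : Tendsto (fun x ↦ k x / log (N x)) l atTop) :
    ∀ᶠ x in l, 0 < log (N x) := by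
  filter_upwards [h.eventually_gt_atTop 0] with x hx
  refine (log_natCast_nonneg (N x)).lt_of_ne fun h0 ↦ ?_
  simp [← h0] at hx

lemma tendsto_atTop_of_tendsto_div_log (h : Tendsto (fun x ↦ k x / log (N x)) l atTop) :
    Tendsto k l atTop := by
  refine tendsto_atTop_mono' l ?_ (h.atTop_mul_const (log_pos one_lt_two))
  filter_upwards [eventually_log_pos_of_tendsto_div_log h, h.eventually_ge_atTop 0]
    with x hlog hratio
  have hN : (2 : ℝ) ≤ N x := by
    have : 1 < N x := by exact_mod_cast (log_pos_iff (Nat.cast_nonneg _)).mp hlog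
    exact_mod_cast this
  calc k x / log (N x) * log 2 ≤ k x / log (N x) * log (N x) := by
        gcongr
    _ = k x := div_mul_cancel₀ _ hlog.ne'

lemma tendsto_exp_neg_mul_mul_one_add_of_tendsto_div_log {c : ℝ} (hc : 0 < c)
    (h : Tendsto (fun x ↦ k x / log (N x)) l atTop) :
    Tendsto (fun x ↦ exp (-c * k x) * (1 + N x)) l (𝓝 0) := by
  have hlim : Tendsto (fun x ↦ 2 * exp (-(c / 2 * k x))) l (𝓝 0) := by
    simpa using (tendsto_exp_neg_atTop_nhds_zero.comp
      ((tendsto_atTop_of_tendsto_div_log h).const_mul_atTop (half_pos hc))).const_mul 2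
  refine squeeze_zero' (.of_forall fun x ↦ by positivity) ?_ hlim
  filter_upwards [eventually_log_pos_of_tendsto_div_log h, h.eventually_ge_atTop (2 / c)]
    with x hlog hratio
  have hN : (1 : ℝ) ≤ N x := ((log_pos_iff (Nat.cast_nonneg _)).mp hlog).le
  have hlogk : log (N x) ≤ c / 2 * k x := by
    rw [div_le_div_iff₀ hc hlog] at hratio
    linarith
  calc exp (-c * k x) * (1 + N x) ≤ 2 * exp (-c * k x + log (N x)) := by
        rw [exp_add, exp_log (by linarith)]
        nlinarith [exp_pos (-c * k x)]
    _ ≤ 2 * exp (-(c / 2 * k x)) := by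
        gcongr
        linarith

end ScanConsistency

theorem stmt_11_general
    {Ω : ℕ → Type*} [∀ n, MeasurableSpace (Ω n)]
    (μ : ∀ n, Measure (Ω n))
    (a b M : ℝ) (hab : a < b) (hM : 0 < M)
    (Act : ∀ n, Finset (Fin n))
    (Aval : ∀ n, Fin n → ℝ)
    (hInact : ∀ n, ∀ v ∉ Act n, Aval n v = a)
    (hAct : ∀ n, ∀ v ∈ Act n, b ≤ Aval n v)
    (ε : ∀ n, Fin n → Ω n → ℝ)
    (hmeas : ∀ n i, Measurable (ε n i))
    (hindep : ∀ n, iIndepFun (ε n) (μ n))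
    (hmean : ∀ n i, ∫ ω, ε n i ω ∂(μ n) = 0)
    (hbd : ∀ n i, ∀ᵐ ω ∂(μ n), |ε n i ω| ≤ M)
    (X : ∀ n, Fin n → Ω n → ℝ) (hX : ∀ n v ω, X n v ω = Aval n v + ε n v ω)
    (k : ℕ → ℕ)
    (𝒦 : ∀ n, Finset (Finset (Fin n)))
    (h𝒦card : ∀ n, ∀ K ∈ 𝒦 n, K.card = k n)
    (K₀ : ∀ n, Finset (Fin n))
    (hK₀mem : ∀ n, K₀ n ∈ 𝒦 n)
    (hK₀inact : ∀ n, K₀ n ∩ Act n = ∅)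
    (hgrow : Tendsto (fun n => (k n : ℝ) / Real.log ((𝒦 n).card : ℝ)) atTop atTop)
    (Khat : ∀ n, Ω n → Finset (Fin n))
    (hKhat : ∀ n ω, Khat n ω ∈ 𝒦 n ∧
        ∀ K ∈ 𝒦 n, ∑ v ∈ Khat n ω, X n v ω ≤ ∑ v ∈ K, X n v ω)
    (ahat : ∀ n, Ω n → ℝ)
    (hahat : ∀ n ω, ahat n ω = (1 / (k n : ℝ)) * ∑ v ∈ Khat n ω, X n v ω) :
    ∀ δ > 0,
      Tendsto (fun n => ((μ n) {ω | δ < |ahat n ω - a|}).toReal) atTop (nhds 0) := by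
  intro δ hδ
  have hA : ∀ n v, a ≤ Aval n v := fun n v ↦ by
    by_cases hv : v ∈ Act n
    · exact hab.le.trans (hAct n v hv)
    · exact (hInact n v hv).ge
  have hA₀ : ∀ n, ∀ v ∈ K₀ n, Aval n v = a := fun n v hv ↦
    hInact n v fun hact ↦ by simpa [hK₀inact n] using Finset.mem_inter.mpr ⟨hv, hact⟩
  simp only [hX] at hKhat hahat
  refine squeeze_zero (fun n ↦ ENNReal.toReal_nonneg) (fun n ↦ ?_)
    (tendsto_exp_neg_mul_mul_one_add_of_tendsto_div_log (c := δ ^ 2 / (2 * M ^ 2))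
      (by positivity) hgrow)
  simp only [hahat]
  exact measureReal_scan_deviation_le (hmeas n) (hindep n) (hmean n) (hbd n) (hA n) (h𝒦card n)
    (hK₀mem n) (hA₀ n) (fun ω ↦ ⟨(hKhat n ω).1, (hKhat n ω).2 _ (hK₀mem n)⟩) hδ.le

/-- Consistency master theorem: under the bounded-noise graph model, if the candidate
family `𝒦(n)` contains a fully inactive `k(n)`-set, `k(n)/log|𝒦(n)| → ∞` and
`|𝒦(n)|·e^{−n} → 0`, then the graph scan estimator converges to `a` in probability,
regardless of the adversary's choice of values on active vertices. -/
theorem stmt_11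
    {Ω : ℕ → Type*} [∀ n, MeasurableSpace (Ω n)]
    (μ : ∀ n, Measure (Ω n)) (hprob : ∀ n, IsProbabilityMeasure (μ n))
    (a b σ M : ℝ) (hab : a < b) (hM : 0 < M)
    (Act : ∀ n, Finset (Fin n))
    (Aval : ∀ n, Fin n → ℝ)
    (hInact : ∀ n, ∀ v ∉ Act n, Aval n v = a)
    (hAct : ∀ n, ∀ v ∈ Act n, b ≤ Aval n v)
    (ε : ∀ n, Fin n → Ω n → ℝ)
    (hmeas : ∀ n i, Measurable (ε n i))
    (hindep : ∀ n, iIndepFun (ε n) (μ n))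
    (hident : ∀ n i j, IdentDistrib (ε n i) (ε n j) (μ n) (μ n))
    (hmean : ∀ n i, ∫ ω, ε n i ω ∂(μ n) = 0)
    (hvar : ∀ n i, variance (ε n i) (μ n) = σ ^ 2)
    (hbd : ∀ n i, ∀ᵐ ω ∂(μ n), |ε n i ω| ≤ M)
    (X : ∀ n, Fin n → Ω n → ℝ) (hX : ∀ n v ω, X n v ω = Aval n v + ε n v ω)
    (k : ℕ → ℕ)
    (𝒦 : ∀ n, Finset (Finset (Fin n)))
    (h𝒦card : ∀ n, ∀ K ∈ 𝒦 n, K.card = k n)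
    (K₀ : ∀ n, Finset (Fin n))
    (hK₀mem : ∀ n, K₀ n ∈ 𝒦 n)
    (hK₀inact : ∀ n, K₀ n ∩ Act n = ∅)
    (hgrow : Tendsto (fun n => (k n : ℝ) / Real.log ((𝒦 n).card : ℝ)) atTop atTop)
    (hsize : Tendsto (fun n => ((𝒦 n).card : ℝ) * Real.exp (-(n : ℝ))) atTop (nhds 0))
    (Khat : ∀ n, Ω n → Finset (Fin n))
    (hKhat : ∀ n ω, Khat n ω ∈ 𝒦 n ∧
        ∀ K ∈ 𝒦 n, ∑ v ∈ Khat n ω, X n v ω ≤ ∑ v ∈ K, X n v ω)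
    (ahat : ∀ n, Ω n → ℝ)
    (hahat : ∀ n ω, ahat n ω = (1 / (k n : ℝ)) * ∑ v ∈ Khat n ω, X n v ω) :
    ∀ δ > 0,
      Tendsto (fun n => ((μ n) {ω | δ < |ahat n ω - a|}).toReal) atTop (nhds 0) :=
  stmt_11_general μ a b M hab hM Act Aval hInact hAct ε hmeas hindep hmean hbd X hX k 𝒦 h𝒦card K₀
    hK₀mem hK₀inact hgrow Khat hKhat ahat hahat
end
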